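/- Let X be a system of N discrete random variables matching its environment (Y, f) (i.e., H(y|f(y)) = 0 for all y ∈ Y, with f : Y → X a bijection). Then for every nested partition sequence P of X and every scale n ≥ 1, the complexity profile satisfies C_X^P(n) ≥ C_Y^{P^f}(n), where P^f is the nested partition sequence of Y induced by f. -/

import Mathlib

open scoped BigOperators Classical

namespace Ashby

/-- A probability mass function on a finite sample space. -/
def IsProb {Ω : Type*} [Fintype Ω] (μ : Ω → ℝ) : Prop :=
  (∀ ω, 0 ≤ μ ω) ∧ ∑ ω, μ ω = 1

/-- Probability that the random variable `X` takes the value `a`. -/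
noncomputable def prob {Ω α : Type*} [Fintype Ω] (μ : Ω → ℝ) (X : Ω → α) (a : α) : ℝ :=
  ∑ ω, if X ω = a then μ ω else 0

/-- Shannon entropy of a discrete random variable. -/
noncomputable def H {Ω α : Type*} [Fintype Ω] [Fintype α] (μ : Ω → ℝ) (X : Ω → α) : ℝ :=
  ∑ a, Real.negMulLog (prob μ X a)

/-- Conditional entropy `H(Y|X)`. -/
noncomputable def condH {Ω α β : Type*} [Fintype Ω] [Fintype α] [Fintype β]
    (μ : Ω → ℝ) (Y : Ω → β) (X : Ω → α) : ℝ :=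
  H μ (fun ω => (X ω, Y ω)) - H μ X

/-- Mutual information `I(X;Y)`. -/
noncomputable def mutualInfo {Ω α β : Type*} [Fintype Ω] [Fintype α] [Fintype β]
    (μ : Ω → ℝ) (X : Ω → α) (Y : Ω → β) : ℝ :=
  H μ X + H μ Y - H μ (fun ω => (X ω, Y ω))

/-- Conditional mutual information `I(X;Y|Z)`. -/
noncomputable def condMutualInfo {Ω α β γ : Type*} [Fintype Ω] [Fintype α] [Fintype β] [Fintype γ]
    (μ : Ω → ℝ) (X : Ω → α) (Y : Ω → β) (Z : Ω → γ) : ℝ :=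
  condH μ X Z + condH μ Y Z - condH μ (fun ω => (X ω, Y ω)) Z

/-- Entropy of the joint random variable formed by the components of the system `x`
whose indices lie in the part `S`. -/
noncomputable def Hset {Ω α ι : Type*} [Fintype Ω] [Fintype α] [DecidableEq ι]
    (μ : Ω → ℝ) (x : ι → Ω → α) (S : Finset ι) : ℝ :=
  H μ (fun ω => (fun i : S => x i.1 ω))

/-- A nested partition sequence of the (index set of a) system: for each `n ≥ 1`,
`part n` is a partition of the index set, `part n` refines `part m` whenever `n ≥ m ≥ 1`,
and this refinement is strict whenever `|X| ≥ n > m ≥ 1`. -/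
structure NPS (ι : Type*) [Fintype ι] [DecidableEq ι] where
  part : ℕ → Finset (Finset ι)
  partition : ∀ n, 1 ≤ n → (∅ ∉ part n ∧ ∀ i : ι, ∃! χ, χ ∈ part n ∧ i ∈ χ)
  refines : ∀ m n, 1 ≤ m → m ≤ n → ∀ χ ∈ part n, ∃ χ' ∈ part m, χ ⊆ χ'
  strict : ∀ m n, 1 ≤ m → m < n → n ≤ Fintype.card ι → part n ≠ part m

/-- `S̃_X^P(n) = Σ_{χ ∈ P_n} H(χ)`, with `S̃_X^P(0) = 0`. -/
noncomputable def Stilde {Ω α ι : Type*} [Fintype Ω] [Fintype α] [Fintype ι] [DecidableEq ι]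
    (μ : Ω → ℝ) (x : ι → Ω → α) (P : NPS ι) (n : ℕ) : ℝ :=
  if n = 0 then 0 else ∑ χ ∈ P.part n, Hset μ x χ

/-- The complexity profile `C_X^P(n) = S̃_X^P(n) − S̃_X^P(n−1)`. -/
noncomputable def C {Ω α ι : Type*} [Fintype Ω] [Fintype α] [Fintype ι] [DecidableEq ι]
    (μ : Ω → ℝ) (x : ι → Ω → α) (P : NPS ι) (n : ℕ) : ℝ :=
  Stilde μ x P n - Stilde μ x P (n - 1)

/-!
Matching makes each `y_i` a function of `x_i`, so for every part `χ` the entropy gap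
`H(x_χ) - H(y_χ)` is the conditional entropy `H(x_χ | y_χ) ≥ 0`. Conditional entropy is
subadditive over the pieces `χ ⊆ χ'` of a coarser part and only decreases under further
conditioning, so `H(x_χ' | y_χ') ≤ ∑_{χ ⊆ χ'} H(x_χ | y_χ)`. Hence the total gap
`S̃_X(n) - S̃_Y(n)` is nondecreasing in `n`, which is `C_Y(n) ≤ C_X(n)`. Both properties of
conditional entropy are instances of the submodularity of entropy, itself Gibbs' inequality.
-/

end Ashby

open Real

lemma Real.mul_log_le_mul_log_add_sub {p q : ℝ} (hp : 0 < p) (hq : 0 < q) :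
    p * log q ≤ p * log p + q - p := by
  have h := mul_le_mul_of_nonneg_left (log_le_sub_one_of_pos (div_pos hq hp)) hp.le
  rw [log_div hq.ne' hp.ne', mul_sub, mul_sub, mul_div_cancel₀ q hp.ne'] at h
  linarith

lemma Real.negMulLog_sum_le_sum_negMulLog {κ : Type*} (s : Finset κ) (p : κ → ℝ)
    (hp : ∀ i ∈ s, 0 ≤ p i) : negMulLog (∑ i ∈ s, p i) ≤ ∑ i ∈ s, negMulLog (p i) := by
  simp only [negMulLog, neg_mul, Finset.sum_mul, ← Finset.sum_neg_distrib]
  refine Finset.sum_le_sum fun i hi => neg_le_neg ?_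
  rcases (hp i hi).eq_or_lt with h | h
  · simp [← h]
  · exact mul_le_mul_of_nonneg_left (log_le_log h (Finset.single_le_sum hp hi)) h.le

/-- Subadditivity of entropy, `H(A, B) ≤ H(A) + H(B)`, for a joint mass `r` that need not be
normalised: the total-mass terms on both sides cancel. -/
lemma Real.sum_sum_negMulLog_add_negMulLog_sum_le {α β : Type*} [Fintype α] [Fintype β]
    (r : α → β → ℝ) (hr : ∀ a b, 0 ≤ r a b) :
    ∑ a, ∑ b, negMulLog (r a b) + negMulLog (∑ a, ∑ b, r a b)
      ≤ ∑ a, negMulLog (∑ b, r a b) + ∑ b, negMulLog (∑ a, r a b) := by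
  obtain ⟨R, hR⟩ : ∃ R : α → ℝ, ∀ a, ∑ b, r a b = R a := ⟨_, fun _ => rfl⟩
  obtain ⟨S, hS⟩ : ∃ S : β → ℝ, ∀ b, ∑ a, r a b = S b := ⟨_, fun _ => rfl⟩
  obtain ⟨T, hT⟩ : ∃ T, ∑ a, R a = T := ⟨_, rfl⟩
  have hST : ∑ b, S b = T := by simp only [← hS, ← hT, ← hR]; exact Finset.sum_comm
  have hRS : ∀ a b, r a b ≤ R a ∧ r a b ≤ S b := fun a b =>
    ⟨hR a ▸ Finset.single_le_sum (fun b _ => hr a b) (Finset.mem_univ b),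
      hS b ▸ Finset.single_le_sum (fun a _ => hr a b) (Finset.mem_univ a)⟩
  simp only [hR, hS, hT]
  have hRnn : ∀ a, 0 ≤ R a := fun a => hR a ▸ Finset.sum_nonneg fun b _ => hr a b
  rcases (hT ▸ Finset.sum_nonneg fun a _ => hRnn a : 0 ≤ T).eq_or_lt with hT0 | hTpos
  · have hR0 : ∀ a, R a = 0 := fun a =>
      (Finset.sum_eq_zero_iff_of_nonneg fun a _ => hRnn a).1 (hT.trans hT0.symm) a
        (Finset.mem_univ a)
    have hr0 : ∀ a b, r a b = 0 := fun a b =>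
      le_antisymm ((hRS a b).1.trans (hR0 a).le) (hr a b)
    have hS0 : ∀ b, S b = 0 := fun b => by simp [← hS, hr0]
    simp [hr0, hR0, hS0, ← hT0]
  -- Gibbs' inequality against the product `R a * S b / T` of the marginals.
  have hgibbs : ∀ a b, r a b * (log (R a) + log (S b) - log T)
      ≤ r a b * log (r a b) + R a * S b / T - r a b := by
    intro a b
    rcases (hr a b).eq_or_lt with h | h
    · rw [← h]
      simp only [zero_mul, sub_zero, zero_add]
      exact div_nonneg (mul_nonneg (h.le.trans (hRS a b).1) (h.le.trans (hRS a b).2)) hTpos.le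
    · have hRpos := h.trans_le (hRS a b).1
      have hSpos := h.trans_le (hRS a b).2
      rw [← log_mul hRpos.ne' hSpos.ne', ← log_div (mul_pos hRpos hSpos).ne' hTpos.ne']
      exact mul_log_le_mul_log_add_sub h (div_pos (mul_pos hRpos hSpos) hTpos)
  have hlhs : ∑ a, ∑ b, r a b * (log (R a) + log (S b) - log T)
      = ∑ a, R a * log (R a) + ∑ b, S b * log (S b) - T * log T := by
    simp only [mul_add, mul_sub, Finset.sum_add_distrib, Finset.sum_sub_distrib, ← Finset.sum_mul,
      hR, hT]
    rw [Finset.sum_comm]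
    simp only [← Finset.sum_mul, hS]
  have hrhs : ∑ a, ∑ b, (r a b * log (r a b) + R a * S b / T - r a b)
      = ∑ a, ∑ b, r a b * log (r a b) := by
    simp only [Finset.sum_add_distrib, Finset.sum_sub_distrib, ← Finset.mul_sum, ← Finset.sum_div,
      hR, hT, hST, mul_div_cancel_right₀ _ hTpos.ne']
    ring
  have hsum := Finset.sum_le_sum fun a (_ : a ∈ Finset.univ) =>
    Finset.sum_le_sum fun b (_ : b ∈ Finset.univ) => hgibbs a b
  simp only [negMulLog, neg_mul, Finset.sum_neg_distrib]
  linarith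

namespace Ashby

section Entropy

variable {Ω α β γ δ : Type*} [Fintype Ω] {μ : Ω → ℝ}

lemma prob_nonneg (hμ : ∀ ω, 0 ≤ μ ω) (X : Ω → α) (a : α) : 0 ≤ prob μ X a :=
  Finset.sum_nonneg fun ω _ => by split_ifs <;> simp [hμ ω]

lemma prob_comp_apply_of_injective (μ : Ω → ℝ) (X : Ω → α) {g : α → β}
    (hg : Function.Injective g) (a : α) : prob μ (fun ω => g (X ω)) (g a) = prob μ X a := by
  simp only [prob, hg.eq_iff]

lemma prob_eq_zero_of_notMem_range (μ : Ω → ℝ) (X : Ω → α) (g : α → β) {b : β}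
    (hb : b ∉ Set.range g) : prob μ (fun ω => g (X ω)) b = 0 :=
  Finset.sum_eq_zero fun ω _ => if_neg fun h => hb ⟨X ω, h⟩

lemma prob_eq_sum_prob_pair [Fintype β] (μ : Ω → ℝ) (X : Ω → α) (Y : Ω → β) (a : α) :
    prob μ X a = ∑ b, prob μ (fun ω => (X ω, Y ω)) (a, b) := by
  unfold prob
  rw [Finset.sum_comm]
  refine Finset.sum_congr rfl fun ω _ => ?_
  by_cases h : X ω = a <;> simp [h]

lemma H_comp_of_injective [Fintype α] [Fintype β] (μ : Ω → ℝ) (X : Ω → α) {g : α → β}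
    (hg : Function.Injective g) :
    H μ (fun ω => g (X ω)) = H μ X :=
  (Fintype.sum_of_injective g hg _ _
    (fun _ hb => by rw [prob_eq_zero_of_notMem_range μ X g hb, negMulLog_zero])
    (fun a => by rw [prob_comp_apply_of_injective μ X hg])).symm

lemma H_pair_comm [Fintype α] [Fintype β] (μ : Ω → ℝ) (X : Ω → α) (Y : Ω → β) :
    H μ (fun ω => (Y ω, X ω)) = H μ (fun ω => (X ω, Y ω)) :=
  H_comp_of_injective μ (fun ω => (X ω, Y ω)) Prod.swap_injective

lemma H_le_H_pair [Fintype α] [Fintype β] (hμ : ∀ ω, 0 ≤ μ ω) (X : Ω → α) (Y : Ω → β) :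
    H μ X ≤ H μ (fun ω => (X ω, Y ω)) := by
  unfold H
  rw [Fintype.sum_prod_type]
  refine Finset.sum_le_sum fun a _ => ?_
  rw [prob_eq_sum_prob_pair μ X Y a]
  exact negMulLog_sum_le_sum_negMulLog _ _ fun b _ => prob_nonneg hμ _ _

lemma H_submodular [Fintype α] [Fintype β] [Fintype γ] (hμ : ∀ ω, 0 ≤ μ ω)
    (X : Ω → α) (Y : Ω → β) (Z : Ω → γ) :
    H μ (fun ω => (Z ω, X ω, Y ω)) + H μ Z
      ≤ H μ (fun ω => (Z ω, X ω)) + H μ (fun ω => (Z ω, Y ω)) := by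
  let p c a b := prob μ (fun ω => (Z ω, X ω, Y ω)) (c, a, b)
  have hZ : ∀ c, prob μ Z c = ∑ a, ∑ b, p c a b := fun c => by
    rw [prob_eq_sum_prob_pair μ Z (fun ω => (X ω, Y ω)), Fintype.sum_prod_type]
  have hZX : ∀ c a, prob μ (fun ω => (Z ω, X ω)) (c, a) = ∑ b, p c a b := fun c a => by
    rw [prob_eq_sum_prob_pair μ _ Y]
    exact Finset.sum_congr rfl fun b _ => (prob_comp_apply_of_injective μ _
      (Equiv.prodAssoc γ α β).injective ((c, a), b)).symm
  have hZY : ∀ c b, prob μ (fun ω => (Z ω, Y ω)) (c, b) = ∑ a, p c a b := fun c b => by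
    rw [prob_eq_sum_prob_pair μ _ X]
    refine Finset.sum_congr rfl fun a _ => (prob_comp_apply_of_injective μ _
      (g := fun u : (γ × β) × α => (u.1.1, u.2, u.1.2)) ?_ ((c, b), a)).symm
    rintro ⟨⟨_, _⟩, _⟩ ⟨⟨_, _⟩, _⟩ h
    simp_all
  simp only [H, Fintype.sum_prod_type, hZ, hZX, hZY, ← Finset.sum_add_distrib]
  exact Finset.sum_le_sum fun c _ =>
    sum_sum_negMulLog_add_negMulLog_sum_le (p c) fun a b => prob_nonneg hμ _ _

lemma condH_nonneg [Fintype α] [Fintype β] (hμ : ∀ ω, 0 ≤ μ ω) (Y : Ω → β) (X : Ω → α) :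
    0 ≤ condH μ Y X :=
  sub_nonneg.2 (H_le_H_pair hμ X Y)

lemma condH_comp_of_injective [Fintype α] [Fintype β] [Fintype δ] (μ : Ω → ℝ) (V : Ω → α)
    (W : Ω → δ) {g : α → β} (hg : Function.Injective g) :
    condH μ (fun ω => g (V ω)) W = condH μ V W := by
  unfold condH
  congr 1
  exact H_comp_of_injective μ (fun ω => (W ω, V ω)) (g := Prod.map id g)
    (Function.injective_id.prodMap hg)

lemma condH_eq_zero_of_subsingleton [Fintype α] [Fintype δ] [Subsingleton α] (μ : Ω → ℝ)
    (V : Ω → α) (W : Ω → δ) :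
    condH μ V W = 0 := by
  have hfst : Function.Injective (Prod.fst : δ × α → δ) := fun u v h =>
    Prod.ext h (Subsingleton.elim _ _)
  rw [condH, ← H_comp_of_injective μ (fun ω => (W ω, V ω)) hfst, sub_self]

lemma condH_pair_le [Fintype α] [Fintype β] [Fintype δ] (hμ : ∀ ω, 0 ≤ μ ω)
    (A : Ω → α) (B : Ω → β) (W : Ω → δ) :
    condH μ (fun ω => (A ω, B ω)) W ≤ condH μ A W + condH μ B W := by
  have := H_submodular hμ A B W
  unfold condH
  linarith

lemma condH_le_condH_comp [Fintype α] [Fintype β] [Fintype δ] (hμ : ∀ ω, 0 ≤ μ ω)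
    (Y : Ω → β) (X : Ω → α) (g : α → δ) :
    condH μ Y X ≤ condH μ Y (fun ω => g (X ω)) := by
  have hX : H μ (fun ω => (g (X ω), X ω)) = H μ X :=
    H_comp_of_injective μ X (g := fun a => (g a, a)) fun _ _ h => congrArg Prod.snd h
  have hXY : H μ (fun ω => (g (X ω), X ω, Y ω)) = H μ (fun ω => (X ω, Y ω)) :=
    H_comp_of_injective μ (fun ω => (X ω, Y ω)) (g := fun u => (g u.1, u))
      fun _ _ h => congrArg Prod.snd h
  have := H_submodular hμ X Y fun ω => g (X ω)
  unfold condH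
  linarith

end Entropy

section Joint

variable {Ω α β δ ι : Type*} [Fintype Ω] [Fintype α] [Fintype β] [Fintype δ] [DecidableEq ι]
  {μ : Ω → ℝ}

def joint (x : ι → Ω → α) (S : Finset ι) : Ω → S → α := fun ω i => x i ω

lemma condH_joint_union_le (hμ : ∀ ω, 0 ≤ μ ω) (x : ι → Ω → α) (S T : Finset ι) (W : Ω → δ) :
    condH μ (joint x (S ∪ T)) W ≤ condH μ (joint x S) W + condH μ (joint x T) W := by
  have hsplit : Function.Injective fun f : ↥(S ∪ T) → α =>
      (fun i : S => f ⟨i, Finset.mem_union_left T i.2⟩,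
        fun i : T => f ⟨i, Finset.mem_union_right S i.2⟩) := by
    intro f g h
    funext ⟨i, hi⟩
    rcases Finset.mem_union.1 hi with hi | hi
    · exact congrFun (congrArg Prod.fst h) ⟨i, hi⟩
    · exact congrFun (congrArg Prod.snd h) ⟨i, hi⟩
  rw [← condH_comp_of_injective μ _ W hsplit]
  exact condH_pair_le hμ _ _ W

lemma condH_joint_biUnion_le {κ : Type*} (hμ : ∀ ω, 0 ≤ μ ω) (x : ι → Ω → α) (s : Finset κ)
    (f : κ → Finset ι) (W : Ω → δ) :
    condH μ (joint x (s.biUnion f)) W ≤ ∑ k ∈ s, condH μ (joint x (f k)) W := by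
  induction s using Finset.induction_on with
  | empty =>
    rw [Finset.biUnion_empty, Finset.sum_empty]
    exact (condH_eq_zero_of_subsingleton μ _ W).le
  | insert k s hk ih =>
    rw [Finset.biUnion_insert, Finset.sum_insert hk]
    exact (condH_joint_union_le hμ x _ _ W).trans (add_le_add le_rfl ih)

lemma condH_joint_le_sum (hμ : ∀ ω, 0 ≤ μ ω) (x : ι → Ω → α) (S : Finset ι) (W : Ω → δ) :
    condH μ (joint x S) W ≤ ∑ i ∈ S, condH μ (x i) W := by
  have hsingle : ∀ i, condH μ (joint x {i}) W = condH μ (x i) W := fun i => by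
    have hconst : joint x {i} = fun ω (_ : ({i} : Finset ι)) => x i ω := by
      funext ω ⟨j, hj⟩
      obtain rfl := Finset.mem_singleton.1 hj
      rfl
    rw [hconst]
    exact condH_comp_of_injective μ (x i) W (g := fun a (_ : ({i} : Finset ι)) => a)
      fun a b h => congrFun h ⟨i, Finset.mem_singleton_self i⟩
  have h := condH_joint_biUnion_le hμ x S singleton W
  rwa [Finset.biUnion_singleton_eq_self, Finset.sum_congr rfl fun i _ => hsingle i] at h

lemma condH_joint_le_condH_joint_of_subset (hμ : ∀ ω, 0 ≤ μ ω) (V : Ω → β) (x : ι → Ω → α)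
    {S T : Finset ι} (hST : S ⊆ T) : condH μ V (joint x T) ≤ condH μ V (joint x S) :=
  condH_le_condH_comp hμ V (joint x T) fun (f : T → α) (i : S) => f ⟨i, hST i.2⟩

lemma condH_joint_le_condH_apply (hμ : ∀ ω, 0 ≤ μ ω) (V : Ω → β) (x : ι → Ω → α)
    {S : Finset ι} {i : ι} (hi : i ∈ S) : condH μ V (joint x S) ≤ condH μ V (x i) :=
  condH_le_condH_comp hμ V (joint x S) fun f => f ⟨i, hi⟩

lemma condH_joint_eq_zero (hμ : ∀ ω, 0 ≤ μ ω) {x : ι → Ω → α} {y : ι → Ω → β}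
    (hmatch : ∀ i, condH μ (y i) (x i) = 0) (S : Finset ι) :
    condH μ (joint y S) (joint x S) = 0 := by
  refine le_antisymm ?_ (condH_nonneg hμ _ _)
  calc condH μ (joint y S) (joint x S) ≤ ∑ i ∈ S, condH μ (y i) (joint x S) :=
        condH_joint_le_sum hμ y S _
    _ ≤ ∑ i ∈ S, condH μ (y i) (x i) :=
        Finset.sum_le_sum fun i hi => condH_joint_le_condH_apply hμ (y i) x hi
    _ = 0 := by simp [hmatch]

lemma Hset_sub_Hset_eq_condH (hμ : ∀ ω, 0 ≤ μ ω) {x : ι → Ω → α} {y : ι → Ω → β}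
    (hmatch : ∀ i, condH μ (y i) (x i) = 0) (S : Finset ι) :
    Hset μ x S - Hset μ y S = condH μ (joint x S) (joint y S) := by
  have h := condH_joint_eq_zero hμ hmatch S
  rw [condH, H_pair_comm] at h
  rw [condH]
  change H μ (joint x S) - H μ (joint y S) = _
  linarith

end Joint

namespace NPS

variable {ι : Type*} [Fintype ι] [DecidableEq ι] (P : NPS ι) {m n : ℕ}

lemma eq_of_mem_of_mem (hm : 1 ≤ m) {χ₁ χ₂ : Finset ι} (h₁ : χ₁ ∈ P.part m)
    (h₂ : χ₂ ∈ P.part m) {i : ι} (hi₁ : i ∈ χ₁) (hi₂ : i ∈ χ₂) : χ₁ = χ₂ :=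
  ((P.partition m hm).2 i).unique ⟨h₁, hi₁⟩ ⟨h₂, hi₂⟩

lemma existsUnique_superset (hm : 1 ≤ m) (hmn : m ≤ n) {χ : Finset ι} (hχ : χ ∈ P.part n) :
    ∃! χ', χ' ∈ P.part m ∧ χ ⊆ χ' := by
  obtain ⟨χ', hχ', hsub⟩ := P.refines m n hm hmn χ hχ
  obtain ⟨i, hi⟩ := Finset.nonempty_iff_ne_empty.2
    (ne_of_mem_of_not_mem hχ (P.partition n (hm.trans hmn)).1)
  exact ⟨χ', ⟨hχ', hsub⟩, fun χ'' ⟨hχ'', hsub'⟩ =>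
    P.eq_of_mem_of_mem hm hχ'' hχ' (hsub' hi) (hsub hi)⟩

lemma sum_part_eq_sum_sum_filter_subset {M : Type*} [AddCommMonoid M] (hm : 1 ≤ m)
    (hmn : m ≤ n) (f : Finset ι → M) :
    ∑ χ ∈ P.part n, f χ = ∑ χ' ∈ P.part m, ∑ χ ∈ (P.part n).filter (· ⊆ χ'), f χ := by
  simp only [Finset.sum_filter]
  rw [Finset.sum_comm]
  refine Finset.sum_congr rfl fun χ hχ => ?_
  obtain ⟨χ', ⟨hχ', hsub⟩, huniq⟩ := P.existsUnique_superset hm hmn hχ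
  rw [Finset.sum_eq_single_of_mem χ' hχ' fun χ'' hχ'' hne =>
    if_neg fun hsub' => hne (huniq χ'' ⟨hχ'', hsub'⟩), if_pos hsub]

lemma biUnion_filter_subset (hm : 1 ≤ m) (hmn : m ≤ n) {χ' : Finset ι}
    (hχ' : χ' ∈ P.part m) : ((P.part n).filter (· ⊆ χ')).biUnion id = χ' := by
  refine subset_antisymm (Finset.biUnion_subset.2 fun χ hχ => (Finset.mem_filter.1 hχ).2)
    fun i hi => ?_
  obtain ⟨χ, ⟨hχ, hiχ⟩, -⟩ := (P.partition n (hm.trans hmn)).2 i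
  obtain ⟨χ'', hχ'', hsub⟩ := P.refines m n hm hmn χ hχ
  rw [P.eq_of_mem_of_mem hm hχ' hχ'' hi (hsub hiχ)]
  exact Finset.mem_biUnion.2 ⟨χ, Finset.mem_filter.2 ⟨hχ, hsub⟩, hiχ⟩

end NPS

section Profile

variable {Ω α β ι : Type*} [Fintype Ω] [Fintype α] [Fintype β] [Fintype ι] [DecidableEq ι]
  {μ : Ω → ℝ}

lemma sum_condH_joint_le_of_le (hμ : ∀ ω, 0 ≤ μ ω) (x : ι → Ω → α) (y : ι → Ω → β)
    (P : NPS ι) {m n : ℕ} (hm : 1 ≤ m) (hmn : m ≤ n) :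
    ∑ χ ∈ P.part m, condH μ (joint x χ) (joint y χ)
      ≤ ∑ χ ∈ P.part n, condH μ (joint x χ) (joint y χ) := by
  rw [P.sum_part_eq_sum_sum_filter_subset hm hmn]
  refine Finset.sum_le_sum fun χ' hχ' => ?_
  calc condH μ (joint x χ') (joint y χ')
      = condH μ (joint x (((P.part n).filter (· ⊆ χ')).biUnion id)) (joint y χ') := by
        rw [P.biUnion_filter_subset hm hmn hχ']
    _ ≤ ∑ χ ∈ (P.part n).filter (· ⊆ χ'), condH μ (joint x χ) (joint y χ') :=
        condH_joint_biUnion_le hμ x _ id _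
    _ ≤ ∑ χ ∈ (P.part n).filter (· ⊆ χ'), condH μ (joint x χ) (joint y χ) :=
        Finset.sum_le_sum fun χ hχ => condH_joint_le_condH_joint_of_subset hμ _ y
          (Finset.mem_filter.1 hχ).2

lemma Stilde_zero (μ : Ω → ℝ) (x : ι → Ω → α) (P : NPS ι) : Stilde μ x P 0 = 0 :=
  if_pos rfl

lemma Stilde_sub_Stilde_eq_sum_condH (hμ : ∀ ω, 0 ≤ μ ω) {x : ι → Ω → α} {y : ι → Ω → β}
    (hmatch : ∀ i, condH μ (y i) (x i) = 0) (P : NPS ι) {n : ℕ} (hn : n ≠ 0) :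
    Stilde μ x P n - Stilde μ y P n = ∑ χ ∈ P.part n, condH μ (joint x χ) (joint y χ) := by
  simp only [Stilde, if_neg hn, ← Finset.sum_sub_distrib, Hset_sub_Hset_eq_condH hμ hmatch]

end Profile

/-- Multi-scale law of requisite variety: if the system `x` matches its environment `y`
(componentwise, under the bijection identifying the index sets, `H(y_i|x_i)=0`), then for
every nested partition sequence `P` (with the corresponding induced sequence on `y`) and
every scale `n ≥ 1`, `C_X^P(n) ≥ C_Y^{P^f}(n)`. -/
theorem multiscale_requisite_variety {Ω α β ι : Type*} [Fintype Ω] [Fintype α] [Fintype β]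
    [Fintype ι] [DecidableEq ι]
    (μ : Ω → ℝ) (hμ : IsProb μ)
    (x : ι → Ω → α) (y : ι → Ω → β)
    (hmatch : ∀ i, condH μ (y i) (x i) = 0)
    (P : NPS ι) :
    ∀ n, 1 ≤ n → C μ y P n ≤ C μ x P n := by
  intro n hn
  have hstep :
      Stilde μ x P (n - 1) - Stilde μ y P (n - 1) ≤ Stilde μ x P n - Stilde μ y P n := by
    rw [Stilde_sub_Stilde_eq_sum_condH hμ.1 hmatch P (n := n) (by omega)]
    rcases Nat.eq_zero_or_pos (n - 1) with h0 | hpos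
    · rw [h0, Stilde_zero, Stilde_zero, sub_self]
      exact Finset.sum_nonneg fun χ _ => condH_nonneg hμ.1 _ _
    · rw [Stilde_sub_Stilde_eq_sum_condH hμ.1 hmatch P hpos.ne']
      exact sum_condH_joint_le_of_le hμ.1 x y P hpos (Nat.sub_le n 1)
  unfold C
  linarith

end Ashby
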